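/- arXiv:1312.2372 — 2 statements merged into one kernel-verified Lean document; each statement's English description precedes it below -/
import Mathlib

section
/- Let a = (a_i)_{i ∈ H} be nonnegative reals with positive total sum S = ∑_{i ∈ H} a_i, and let T ⊆ H with S_T = ∑_{i ∈ T} a_i > 0. Then ∑_{i ∈ T} |a_i/S − a_i/S_T| + ∑_{i ∈ H \ T} a_i/S = 2(S − S_T)/S. -/
/-- The L1 distance between a normalized weight vector and its normalized
truncation equals `2(S − S_T)/S`. -/
theorem normalized_truncation_L1
    {ι : Type*} [DecidableEq ι] (a : ι → ℝ) (ha : ∀ i, 0 ≤ a i)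
    (H T : Finset ι) (hT : T ⊆ H)
    (hS : 0 < ∑ i ∈ H, a i) (hST : 0 < ∑ i ∈ T, a i) :
    (∑ i ∈ T, |a i / (∑ i ∈ H, a i) - a i / (∑ i ∈ T, a i)|)
      + ∑ i ∈ H \ T, a i / (∑ i ∈ H, a i)
      = 2 * ((∑ i ∈ H, a i) - (∑ i ∈ T, a i)) / (∑ i ∈ H, a i) := by
  set S := ∑ i ∈ H, a i with hSdef
  set ST := ∑ i ∈ T, a i with hSTdef
  have hle : ST ≤ S := Finset.sum_le_sum_of_subset_of_nonneg hT (fun i _ _ => ha i)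
  have h1 : ∀ i ∈ T, |a i / S - a i / ST| = a i * (S - ST) / (S * ST) := by
    intro i _
    rw [abs_of_nonpos]
    · field_simp
      ring
    · have : a i / S ≤ a i / ST := by
        apply div_le_div_of_nonneg_left (ha i) hST hle
      linarith
  rw [Finset.sum_congr rfl h1, ← Finset.sum_div, ← Finset.sum_mul,
    ← Finset.sum_div, Finset.sum_sdiff_eq_sub hT]
  rw [← hSTdef]
  field_simp
  ring
end

section
/- In the setting of the previous statement (disjoint I and B with survival weights ω_S on subsets of I and birth weights w_B on subsets of B), suppose J_1,…,J_K are the K subsets of I of largest ω_S-weight and L_1,…,L_M the M subsets of B of largest w_B-weight. Then the truncation keeping hypotheses {J_j ∪ L_m : 1≤j≤K, 1≤m≤M} incurs total discarded weight 1 − (∑_{j=1}^K ω_S(J_j))·(∑_{m=1}^M w_B(L_m)), and this truncation has minimal discarded weight among all truncations of product form T = {J∪L : J ∈ S, L ∈ B'} with |S| = K and |B'| = M. -/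
/-! Because `I` and `B` are disjoint, `C ↦ (C ∩ I, C ∩ B)` identifies the subsets of `I ∪ B` with
pairs of subsets of `I` and of `B`, and the weight of `C` is the product of the two factors. Each
family of multi-Bernoulli weights sums to `1` (expand `∏ ℓ, (p ℓ + (1 - p ℓ))`), so the discarded
weight is `1` minus a product of two nonnegative sums; each sum is largest, among subfamilies of a
given size, for the heaviest subsets. -/

open Finset

namespace Finset

section TopSubsets

variable {ι M : Type*} [AddCommMonoid M] [LinearOrder M]

theorem sum_le_sum_of_card_eq_of_forall_le [IsOrderedAddMonoid M] {s t : Finset ι} {f : ι → M}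
    (hcard : #s = #t) (hle : ∀ x ∈ s, ∀ y ∈ t, f x ≤ f y) :
    ∑ x ∈ s, f x ≤ ∑ y ∈ t, f y := by
  obtain rfl | ht := t.eq_empty_or_nonempty
  · simp_all
  obtain ⟨y₀, hy₀, hmin⟩ := t.exists_min_image f ht
  calc ∑ x ∈ s, f x ≤ #s • f y₀ := sum_le_card_nsmul _ _ _ fun x hx => hle x hx y₀ hy₀
    _ = #t • f y₀ := by rw [hcard]
    _ ≤ ∑ y ∈ t, f y := card_nsmul_le_sum _ _ _ hmin

theorem sum_le_sum_of_card_eq_of_forall_sdiff_le [IsOrderedCancelAddMonoid M]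
    [DecidableEq ι] {P s t : Finset ι} {f : ι → M} (hs : s ⊆ P) (hcard : #s = #t)
    (htop : ∀ y ∈ t, ∀ x ∈ P \ t, f x ≤ f y) :
    ∑ x ∈ s, f x ≤ ∑ y ∈ t, f y :=
  sum_sdiff_le_sum_sdiff.mp <| sum_le_sum_of_card_eq_of_forall_le (card_sdiff_comm hcard)
    fun x hx y hy =>
      htop y (mem_sdiff.mp hy).1 x (mem_sdiff.mpr ⟨hs (mem_sdiff.mp hx).1, (mem_sdiff.mp hx).2⟩)

end TopSubsets

section DisjointUnion

variable {α : Type*} [DecidableEq α] {I B J L : Finset α}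

theorem union_inter_eq_left_of_disjoint (hIB : Disjoint I B) (hJ : J ⊆ I) (hL : L ⊆ B) :
    (J ∪ L) ∩ I = J := by
  rw [union_inter_distrib_right, inter_eq_left.mpr hJ,
    disjoint_iff_inter_eq_empty.mp (hIB.symm.mono_left hL), union_empty]

theorem union_inter_eq_right_of_disjoint (hIB : Disjoint I B) (hJ : J ⊆ I) (hL : L ⊆ B) :
    (J ∪ L) ∩ B = L := by
  rw [union_comm, union_inter_eq_left_of_disjoint hIB.symm hL hJ]

theorem powerset_union_eq_image_product (I B : Finset α) :
    (I ∪ B).powerset = (I.powerset ×ˢ B.powerset).image (fun p => p.1 ∪ p.2) := by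
  rw [powerset_union]
  exact (image_uncurry_product _ _ _).symm

theorem sum_image_union_product {M : Type*} [AddCommMonoid M] {𝒮 ℬ : Finset (Finset α)}
    (hIB : Disjoint I B) (h𝒮 : 𝒮 ⊆ I.powerset) (hℬ : ℬ ⊆ B.powerset)
    (F : Finset α → Finset α → M) :
    ∑ C ∈ (𝒮 ×ˢ ℬ).image (fun p => p.1 ∪ p.2), F (C ∩ I) (C ∩ B)
      = ∑ J ∈ 𝒮, ∑ L ∈ ℬ, F J L := by
  have hsplit : ∀ J ∈ 𝒮, ∀ L ∈ ℬ, (J ∪ L) ∩ I = J ∧ (J ∪ L) ∩ B = L := fun J hJ L hL =>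
    have hJI := mem_powerset.mp (h𝒮 hJ)
    have hLB := mem_powerset.mp (hℬ hL)
    ⟨union_inter_eq_left_of_disjoint hIB hJI hLB, union_inter_eq_right_of_disjoint hIB hJI hLB⟩
  rw [sum_image, sum_product]
  · exact sum_congr rfl fun J hJ => sum_congr rfl fun L hL => by
      rw [(hsplit J hJ L hL).1, (hsplit J hJ L hL).2]
  · rintro ⟨J, L⟩ hJL ⟨J', L'⟩ hJL' (hunion : J ∪ L = J' ∪ L')
    obtain ⟨hJ, hL⟩ := mem_product.mp hJL
    obtain ⟨hJ', hL'⟩ := mem_product.mp hJL'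
    refine Prod.ext ?_ ?_
    · rw [← (hsplit J hJ L hL).1, hunion, (hsplit J' hJ' L' hL').1]
    · rw [← (hsplit J hJ L hL).2, hunion, (hsplit J' hJ' L' hL').2]

end DisjointUnion

end Finset

section MultiBernoulli

variable {α : Type*} [DecidableEq α]

def multiBernoulliWeight (s : Finset α) (p : α → ℝ) (J : Finset α) : ℝ :=
  (∏ ℓ ∈ J, p ℓ) * ∏ ℓ ∈ s \ J, (1 - p ℓ)

theorem sum_powerset_multiBernoulliWeight (s : Finset α) (p : α → ℝ) :
    ∑ J ∈ s.powerset, multiBernoulliWeight s p J = 1 := by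
  simpa [multiBernoulliWeight] using (prod_add p (fun ℓ => 1 - p ℓ) s).symm

theorem multiBernoulliWeight_nonneg {s J : Finset α} {p : α → ℝ} (hJ : J ⊆ s)
    (hp : ∀ ℓ ∈ s, 0 ≤ p ℓ ∧ p ℓ ≤ 1) : 0 ≤ multiBernoulliWeight s p J :=
  mul_nonneg (prod_nonneg fun ℓ hℓ => (hp ℓ (hJ hℓ)).1)
    (prod_nonneg fun ℓ hℓ => sub_nonneg.mpr (hp ℓ (mem_sdiff.mp hℓ).1).2)

end MultiBernoulli

/-- Separate truncation of survival and birth subsets: keeping the top-K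
survival subsets and top-M birth subsets discards weight
`1 − (∑ ω_S)(∑ w_B)`, and this is minimal among product-form truncations. -/
theorem separate_truncation_optimal
    {α : Type*} [DecidableEq α] (I B : Finset α) (hIB : Disjoint I B)
    (η : α → ℝ) (hη : ∀ ℓ ∈ I, 0 < η ℓ ∧ η ℓ < 1)
    (r : α → ℝ) (hr : ∀ ℓ ∈ B, 0 < r ℓ ∧ r ℓ < 1)
    (ωS : Finset α → ℝ) (wB : Finset α → ℝ)
    (hωS : ∀ J, ωS J = (∏ ℓ ∈ J, η ℓ) * ∏ ℓ ∈ I \ J, (1 - η ℓ))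
    (hwB : ∀ L, wB L = (∏ ℓ ∈ L, r ℓ) * ∏ ℓ ∈ B \ L, (1 - r ℓ))
    (K M : ℕ)
    (𝒮 : Finset (Finset α)) (h𝒮 : 𝒮 ⊆ I.powerset) (h𝒮card : 𝒮.card = K)
    (htop𝒮 : ∀ J ∈ 𝒮, ∀ J' ∈ I.powerset \ 𝒮, ωS J' ≤ ωS J)
    (ℬ : Finset (Finset α)) (hℬ : ℬ ⊆ B.powerset) (hℬcard : ℬ.card = M)
    (htopℬ : ∀ L ∈ ℬ, ∀ L' ∈ B.powerset \ ℬ, wB L' ≤ wB L) :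
    (∑ C ∈ (I ∪ B).powerset \ (𝒮 ×ˢ ℬ).image (fun p => p.1 ∪ p.2),
        ωS (C ∩ I) * wB (C ∩ B)
      = 1 - (∑ J ∈ 𝒮, ωS J) * (∑ L ∈ ℬ, wB L))
    ∧ (∀ 𝒮' ⊆ I.powerset, 𝒮'.card = K → ∀ ℬ' ⊆ B.powerset, ℬ'.card = M →
        1 - (∑ J ∈ 𝒮, ωS J) * (∑ L ∈ ℬ, wB L)
          ≤ 1 - (∑ J ∈ 𝒮', ωS J) * (∑ L ∈ ℬ', wB L)) := by
  obtain rfl : ωS = multiBernoulliWeight I η := funext hωS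
  obtain rfl : wB = multiBernoulliWeight B r := funext hwB
  have kept := sum_image_union_product hIB h𝒮 hℬ fun J L =>
    multiBernoulliWeight I η J * multiBernoulliWeight B r L
  have total := sum_image_union_product hIB subset_rfl subset_rfl fun J L =>
    multiBernoulliWeight I η J * multiBernoulliWeight B r L
  simp only [← mul_sum, ← sum_mul, ← powerset_union_eq_image_product,
    sum_powerset_multiBernoulliWeight, mul_one] at kept total
  refine ⟨?_, fun 𝒮' h𝒮' h𝒮'card ℬ' hℬ' hℬ'card => ?_⟩
  · have hkept_sub : (𝒮 ×ˢ ℬ).image (fun p => p.1 ∪ p.2) ⊆ (I ∪ B).powerset :=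
      powerset_union_eq_image_product I B ▸ image_subset_image (product_subset_product h𝒮 hℬ)
    rw [sum_sdiff_eq_sub hkept_sub, total, kept]
  · have hωS_le := sum_le_sum_of_card_eq_of_forall_sdiff_le h𝒮'
      (h𝒮'card.trans h𝒮card.symm) htop𝒮
    have hwB_le := sum_le_sum_of_card_eq_of_forall_sdiff_le hℬ'
      (hℬ'card.trans hℬcard.symm) htopℬ
    have hωS_nonneg : 0 ≤ ∑ J ∈ 𝒮, multiBernoulliWeight I η J := sum_nonneg fun J hJ =>
      multiBernoulliWeight_nonneg (mem_powerset.mp (h𝒮 hJ)) fun ℓ hℓ =>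
        ⟨(hη ℓ hℓ).1.le, (hη ℓ hℓ).2.le⟩
    have hwB_nonneg : 0 ≤ ∑ L ∈ ℬ', multiBernoulliWeight B r L := sum_nonneg fun L hL =>
      multiBernoulliWeight_nonneg (mem_powerset.mp (hℬ' hL)) fun ℓ hℓ =>
        ⟨(hr ℓ hℓ).1.le, (hr ℓ hℓ).2.le⟩
    linarith [mul_le_mul hωS_le hwB_le hwB_nonneg hωS_nonneg]
end
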